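/- arXiv:2504.13225 — 8 statements merged into one kernel-verified Lean document; each statement's English description precedes it below -/
import Mathlib

section
/- Let X be a topological space, let C(X) be the ring of continuous real-valued functions, C*(X) the subring of bounded ones, and let A be an ℝ-subalgebra with C*(X) ⊆ A ⊆ C(X). Then every f ∈ A can be written as f = F/G where F := f/(1+f²) and G := 1/(1+f²) both lie in C*(X), and G is a unit of A with inverse 1+f². Consequently A is the localization of C*(X) at D_A := U(A) ∩ C*(X). -/
/-- Every element `f` of an intermediate algebra `C*(X) ⊆ A ⊆ C(X)` can be written as
`F/G` with `F = f/(1+f²)` and `G = 1/(1+f²)` bounded, `G` a unit of `A` with inverse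
`1 + f²`; consequently `A` is the localization of `C*(X)` at `D_A = U(A) ∩ C*(X)`. -/
theorem stmt4 {X : Type*} [TopologicalSpace X] (A : Subalgebra ℝ C(X, ℝ))
    (hA : ∀ f : C(X, ℝ), (∃ C : ℝ, ∀ x, |f x| ≤ C) → f ∈ A) :
    (∀ f ∈ A, ∃ F G : C(X, ℝ),
      (∃ C : ℝ, ∀ x, |F x| ≤ C) ∧ (∃ C : ℝ, ∀ x, |G x| ≤ C) ∧
      F ∈ A ∧ G ∈ A ∧
      G * (1 + f ^ 2) = 1 ∧ G * f = F ∧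
      (∀ x, F x = f x / (1 + f x ^ 2)) ∧ (∀ x, G x = 1 / (1 + f x ^ 2))) ∧
    (∀ a ∈ A, ∃ F G : C(X, ℝ),
      (∃ C : ℝ, ∀ x, |F x| ≤ C) ∧ (∃ C : ℝ, ∀ x, |G x| ≤ C) ∧
      F ∈ A ∧ G ∈ A ∧ (∃ H ∈ A, G * H = 1) ∧ G * a = F) := by
  have key : ∀ f ∈ A, ∃ F G : C(X, ℝ),
      (∃ C : ℝ, ∀ x, |F x| ≤ C) ∧ (∃ C : ℝ, ∀ x, |G x| ≤ C) ∧
      F ∈ A ∧ G ∈ A ∧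
      G * (1 + f ^ 2) = 1 ∧ G * f = F ∧
      (∀ x, F x = f x / (1 + f x ^ 2)) ∧ (∀ x, G x = 1 / (1 + f x ^ 2)) := by
    intro f hf
    have hpos : ∀ x, (0:ℝ) < 1 + f x ^ 2 := fun x => by positivity
    have hne : ∀ x, (1:ℝ) + f x ^ 2 ≠ 0 := fun x => (hpos x).ne'
    have hcont : Continuous fun x => (1 + f x ^ 2)⁻¹ :=
      Continuous.inv₀ (by continuity) hne
    set G : C(X, ℝ) := ⟨fun x => (1 + f x ^ 2)⁻¹, hcont⟩ with hG
    set F : C(X, ℝ) := G * f with hF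
    have habs : ∀ x, |f x| ≤ 1 + f x ^ 2 := by
      intro x
      nlinarith [sq_nonneg (|f x| - 1), sq_abs (f x)]
    have hFb : ∀ x, |F x| ≤ 1 := by
      intro x
      have : |F x| = |f x| / (1 + f x ^ 2) := by
        simp [hF, hG, abs_mul, abs_inv, abs_of_pos (hpos x), div_eq_inv_mul, mul_comm]
      rw [this, div_le_one (hpos x)]
      exact habs x
    have hGb : ∀ x, |G x| ≤ 1 := by
      intro x
      have : |G x| = 1 / (1 + f x ^ 2) := by
        simp [hG, abs_inv, abs_of_pos (hpos x), one_div]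
      rw [this, div_le_one (hpos x)]
      nlinarith [sq_nonneg (f x)]
    refine ⟨F, G, ⟨1, hFb⟩, ⟨1, hGb⟩, hA F ⟨1, hFb⟩, hA G ⟨1, hGb⟩, ?_, rfl, ?_, ?_⟩
    · ext x
      simp [hG]
      field_simp
    · intro x; simp [hF, hG, div_eq_inv_mul, mul_comm]
    · intro x; simp [hG, one_div]
  refine ⟨key, fun a ha => ?_⟩
  obtain ⟨F, G, hFb, hGb, hFA, hGA, hunit, hprod, -, -⟩ := key a ha
  exact ⟨F, G, hFb, hGb, hFA, hGA,
    ⟨1 + a ^ 2, add_mem (one_mem A) (pow_mem ha 2), hunit⟩, hprod⟩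
end

section
/- Let X be a set, R a subring of the ring of all real-valued functions on X closed under taking absolute values and such that for each g ∈ R the function g/(1+g²) lies in the bounded subring R* ⊆ R. Assume every radical ideal of R* is absolutely convex. Then every prime ideal p of R is absolutely convex: if f, g ∈ R with |f(x)| ≤ |g(x)| for all x ∈ X and g ∈ p, then f ∈ p. -/
/-- In a ring of functions `R` closed under absolute value and under `f, g ↦ f/(1+g²)`
(with the latter landing in the bounded subring `Rb`), if every radical ideal of the
bounded subring is absolutely convex, then every prime ideal of `R` is absolutely
convex. -/
theorem stmt7 {X : Type*} (R Rb : Subring (X → ℝ))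
    (habs : ∀ f ∈ R, (fun x => |f x|) ∈ R)
    (hRb : ∀ f : X → ℝ, f ∈ Rb ↔ f ∈ R ∧ ∃ C : ℝ, ∀ x, |f x| ≤ C)
    (hdiv : ∀ f ∈ R, ∀ g ∈ R, (fun x => f x / (1 + g x ^ 2)) ∈ R)
    (hconv : ∀ a : Ideal Rb, a.IsRadical →
      ∀ f g : Rb, (∀ x, |(f : X → ℝ) x| ≤ |(g : X → ℝ) x|) → g ∈ a → f ∈ a)
    (p : Ideal R) (hp : p.IsPrime) :
    ∀ f g : R, (∀ x, |(f : X → ℝ) x| ≤ |(g : X → ℝ) x|) → g ∈ p → f ∈ p := by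
  intro f g hfg hg
  have hpos : ∀ x, (0:ℝ) < 1 + (g : X → ℝ) x ^ 2 := fun x => by positivity
  -- the divided functions
  set u : X → ℝ := fun x => (g : X → ℝ) x / (1 + (g : X → ℝ) x ^ 2) with hu
  set v : X → ℝ := fun x => (f : X → ℝ) x / (1 + (g : X → ℝ) x ^ 2) with hv
  have huR : u ∈ R := hdiv _ g.2 _ g.2
  have hvR : v ∈ R := hdiv _ f.2 _ g.2
  have hbound : ∀ x, |u x| ≤ 1 := by
    intro x
    rw [hu, abs_div, abs_of_pos (hpos x), div_le_one (hpos x)]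
    nlinarith [sq_nonneg (|(g : X → ℝ) x| - 1), sq_abs ((g : X → ℝ) x)]
  have hvbound : ∀ x, |v x| ≤ 1 := by
    intro x
    rw [hv, abs_div, abs_of_pos (hpos x), div_le_one (hpos x)]
    have := hfg x
    nlinarith [sq_nonneg (|(g : X → ℝ) x| - 1), sq_abs ((g : X → ℝ) x)]
  have huRb : u ∈ Rb := (hRb u).mpr ⟨huR, 1, hbound⟩
  have hvRb : v ∈ Rb := (hRb v).mpr ⟨hvR, 1, hvbound⟩
  -- 1 + g² ∉ p
  have h1g : (1 + g * g : R) ∉ p := by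
    intro h
    have hgg : (g * g : R) ∈ p := Ideal.mul_mem_left p g hg
    have h1 : (1 : R) ∈ p := by simpa using p.sub_mem h hgg
    exact hp.ne_top (p.eq_top_of_isUnit_mem h1 isUnit_one)
  set uR : R := ⟨u, huR⟩
  set vR : R := ⟨v, hvR⟩
  have key : ∀ w : X → ℝ, (1 + g * g : R).1 * (fun x => w x / (1 + (g:X→ℝ) x ^ 2)) = w := by
    intro w
    funext x
    have h := (hpos x).ne'
    show (1 + (g:X→ℝ) x * (g:X→ℝ) x) * (w x / (1 + (g:X→ℝ) x ^ 2)) = w x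
    field_simp
  have hmulu : (1 + g * g : R) * uR = g := by
    apply Subtype.ext
    exact key (g : X → ℝ)
  have hup : uR ∈ p := by
    rcases hp.mem_or_mem (hmulu ▸ hg) with h | h
    · exact absurd h h1g
    · exact h
  -- contract p to Rb
  have memR : ∀ b : Rb, (b : X → ℝ) ∈ R := fun b => ((hRb b).mp b.2).1
  let ι : Rb →+* R :=
    { toFun := fun b => ⟨b, memR b⟩
      map_one' := rfl
      map_mul' := fun _ _ => rfl
      map_zero' := rfl
      map_add' := fun _ _ => rfl }
  have hq : (p.comap ι).IsPrime := Ideal.IsPrime.comap ι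
  have hvq : (⟨v, hvRb⟩ : Rb) ∈ p.comap ι := by
    refine hconv _ hq.isRadical ⟨v, hvRb⟩ ⟨u, huRb⟩ ?_ ?_
    · intro x
      show |v x| ≤ |u x|
      rw [hu, hv, abs_div, abs_div]
      apply div_le_div_of_nonneg_right (hfg x)
      exact (abs_pos.mpr (hpos x).ne').le
    · show ι ⟨u, huRb⟩ ∈ p
      exact hup
  have hvp : vR ∈ p := hvq
  have hmulv : (1 + g * g : R) * vR = f := Subtype.ext (key (f : X → ℝ))
  exact hmulv ▸ Ideal.mul_mem_left p _ hvp
end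

section
/- Let A be a ring of real-valued functions on a set X containing the constants, closed under absolute value, such that every radical ideal is absolutely convex. If m₁ and m₂ are distinct maximal ideals of A, then there exist bounded functions F₁ ∈ m₁ and F₂ ∈ m₂ with F₁ + F₂ = 1 and 0 ≤ F_i ≤ 1 pointwise. -/
/-!
Since `m₁ + m₂ = A`, write `2 = f₁ + f₂` with `fᵢ ∈ mᵢ`. Then `f₁² + f₂² ≥ 2`, so `Fᵢ = fᵢ² / (f₁² + f₂²)`
lies in `A`, and `F₁ + F₂ = 1` with `0 ≤ Fᵢ ≤ 1`. Moreover `|fᵢ| ≤ f₁² + f₂²` pointwise, hence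
`|Fᵢ| ≤ |fᵢ|`, and `Fᵢ ∈ mᵢ` because the maximal, hence radical, ideal `mᵢ` is absolutely convex.
-/

lemma one_le_sq_add_sq_of_add_eq_two {u v : ℝ} (h : u + v = 2) : 1 ≤ u ^ 2 + v ^ 2 := by
  nlinarith [sq_nonneg (u - v)]

lemma abs_le_sq_add_sq_of_add_eq_two {u v : ℝ} (h : u + v = 2) : |u| ≤ u ^ 2 + v ^ 2 := by
  rcases abs_cases u with ⟨hu, _⟩ | ⟨hu, _⟩ <;> rw [hu] <;>
    nlinarith [sq_nonneg (u - 1), sq_nonneg (v - 1), sq_nonneg (u + 1)]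

section SqWeight

variable {X : Type*}

noncomputable def sqWeight (f h : X → ℝ) : X → ℝ := fun x => f x ^ 2 / (f x ^ 2 + h x ^ 2)

lemma sqWeight_nonneg (f h : X → ℝ) (x : X) : 0 ≤ sqWeight f h x := by
  unfold sqWeight; positivity

lemma sqWeight_le_one (f h : X → ℝ) (x : X) : sqWeight f h x ≤ 1 :=
  div_le_one_of_le₀ (le_add_of_nonneg_right (sq_nonneg _)) (by positivity)

lemma sqWeight_add_swap {f h : X → ℝ} (hsum : ∀ x, f x + h x = 2) :
    sqWeight f h + sqWeight h f = 1 := by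
  funext x
  have hpos : 0 < f x ^ 2 + h x ^ 2 := one_pos.trans_le (one_le_sq_add_sq_of_add_eq_two (hsum x))
  simp only [sqWeight, Pi.add_apply, Pi.one_apply]
  rw [add_comm (h x ^ 2), ← add_div, div_self hpos.ne']

lemma abs_sqWeight_le {f h : X → ℝ} (hsum : ∀ x, f x + h x = 2) (x : X) :
    |sqWeight f h x| ≤ |f x| := by
  have hpos : 0 < f x ^ 2 + h x ^ 2 := one_pos.trans_le (one_le_sq_add_sq_of_add_eq_two (hsum x))
  rw [sqWeight, abs_div, abs_of_pos hpos, div_le_iff₀ hpos, abs_pow, sq]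
  exact mul_le_mul_of_nonneg_left (abs_le_sq_add_sq_of_add_eq_two (hsum x)) (abs_nonneg _)

lemma sqWeight_mem {A : Subring (X → ℝ)}
    (hdiv : ∀ f ∈ A, ∀ g ∈ A, (∀ x, (1 : ℝ) ≤ g x) → (fun x => f x / g x) ∈ A)
    {f h : X → ℝ} (hf : f ∈ A) (hh : h ∈ A) (hsum : ∀ x, f x + h x = 2) :
    sqWeight f h ∈ A :=
  hdiv _ (pow_mem hf 2) _ (add_mem (pow_mem hf 2) (pow_mem hh 2))
    fun x => one_le_sq_add_sq_of_add_eq_two (hsum x)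

end SqWeight

theorem stmt10_general {X : Type*} (A : Subring (X → ℝ))
    (hdiv : ∀ f ∈ A, ∀ g ∈ A, (∀ x, (1 : ℝ) ≤ g x) → (fun x => f x / g x) ∈ A)
    (hconv : ∀ a : Ideal A, a.IsRadical →
      ∀ f g : A, (∀ x, |(f : X → ℝ) x| ≤ |(g : X → ℝ) x|) → g ∈ a → f ∈ a)
    (m₁ m₂ : Ideal A) (h₁ : m₁.IsMaximal) (h₂ : m₂.IsMaximal) (hne : m₁ ≠ m₂) :
    ∃ F₁ F₂ : A, F₁ ∈ m₁ ∧ F₂ ∈ m₂ ∧ F₁ + F₂ = 1 ∧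
      (∀ x, 0 ≤ (F₁ : X → ℝ) x ∧ (F₁ : X → ℝ) x ≤ 1) ∧
      (∀ x, 0 ≤ (F₂ : X → ℝ) x ∧ (F₂ : X → ℝ) x ≤ 1) := by
  have htwo : (2 : A) ∈ m₁ ⊔ m₂ := (h₁.coprime_of_ne h₂ hne).symm ▸ Submodule.mem_top
  obtain ⟨f₁, hf₁, f₂, hf₂, hsum⟩ := Submodule.mem_sup.mp htwo
  have hsum₁ : ∀ x, (f₁ : X → ℝ) x + (f₂ : X → ℝ) x = 2 :=
    congrFun (congrArg Subtype.val hsum)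
  have hsum₂ : ∀ x, (f₂ : X → ℝ) x + (f₁ : X → ℝ) x = 2 :=
    fun x => (add_comm _ _).trans (hsum₁ x)
  let F₁ : A := ⟨sqWeight f₁ f₂, sqWeight_mem hdiv f₁.2 f₂.2 hsum₁⟩
  let F₂ : A := ⟨sqWeight f₂ f₁, sqWeight_mem hdiv f₂.2 f₁.2 hsum₂⟩
  refine ⟨F₁, F₂, ?_, ?_, Subtype.ext (sqWeight_add_swap hsum₁),
    fun x => ⟨sqWeight_nonneg _ _ x, sqWeight_le_one _ _ x⟩,
    fun x => ⟨sqWeight_nonneg _ _ x, sqWeight_le_one _ _ x⟩⟩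
  · exact hconv m₁ h₁.isPrime.isRadical F₁ f₁ (abs_sqWeight_le hsum₁) hf₁
  · exact hconv m₂ h₂.isPrime.isRadical F₂ f₂ (abs_sqWeight_le hsum₂) hf₂

/-- In a ring of real-valued functions containing the constants, closed under absolute
value and division by functions `≥ 1`, in which radical ideals are absolutely convex:
for distinct maximal ideals `m₁ ≠ m₂` there are functions `F₁ ∈ m₁`, `F₂ ∈ m₂` with
`F₁ + F₂ = 1` and `0 ≤ Fᵢ ≤ 1` pointwise (in particular bounded). -/
theorem stmt10 {X : Type*} (A : Subring (X → ℝ))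
    (hconst : ∀ r : ℝ, (fun _ => r) ∈ A)
    (habs : ∀ f ∈ A, (fun x => |f x|) ∈ A)
    (hdiv : ∀ f ∈ A, ∀ g ∈ A, (∀ x, (1 : ℝ) ≤ g x) → (fun x => f x / g x) ∈ A)
    (hconv : ∀ a : Ideal A, a.IsRadical →
      ∀ f g : A, (∀ x, |(f : X → ℝ) x| ≤ |(g : X → ℝ) x|) → g ∈ a → f ∈ a)
    (m₁ m₂ : Ideal A) (h₁ : m₁.IsMaximal) (h₂ : m₂.IsMaximal) (hne : m₁ ≠ m₂) :
    ∃ F₁ F₂ : A, F₁ ∈ m₁ ∧ F₂ ∈ m₂ ∧ F₁ + F₂ = 1 ∧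
      (∀ x, 0 ≤ (F₁ : X → ℝ) x ∧ (F₁ : X → ℝ) x ≤ 1) ∧
      (∀ x, 0 ≤ (F₂ : X → ℝ) x ∧ (F₂ : X → ℝ) x ≤ 1) :=
  stmt10_general A hdiv hconv m₁ m₂ h₁ h₂ hne
end

section
/- Let m be a maximal ideal of the ring C*(X) of bounded continuous (semialgebraic) real-valued functions on X. Then the composite ℝ → C*(X) → C*(X)/m is a ring isomorphism; equivalently, the residue field C*(X)/m is (canonically) ℝ. The key ordered-field fact: ℝ admits no proper archimedean ordered field extension, and C*(X)/m is archimedean over ℝ since every f ∈ C*(X) satisfies |f| ≤ r for some real r. -/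
set_option synthInstance.maxHeartbeats 800000
set_option maxHeartbeats 1000000

open BoundedContinuousFunction Metric

/-- For a maximal ideal `m` of the ring of bounded continuous real-valued functions,
the composite `ℝ → C*(X) → C*(X)/m` is a ring isomorphism (bijective). -/
theorem stmt12 {X : Type*} [TopologicalSpace X]
    (m : Ideal (BoundedContinuousFunction X ℝ)) (hm : m.IsMaximal) :
    Function.Bijective
      ((Ideal.Quotient.mk m).comp (algebraMap ℝ (BoundedContinuousFunction X ℝ))) := by
  haveI := hm
  letI : Field ((BoundedContinuousFunction X ℝ) ⧸ m) := Ideal.Quotient.field m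
  constructor
  · exact RingHom.injective _
  · intro y
    obtain ⟨f, rfl⟩ := Ideal.Quotient.mk_surjective y
    by_contra hc
    push_neg at hc
    set π := Ideal.Quotient.mk m with hπ
    have hne : ∀ t : ℝ, π ((f - algebraMap ℝ _ t) ^ 2) ≠ 0 := by
      intro t h
      rw [map_pow] at h
      have h0 : π (f - algebraMap ℝ _ t) = 0 := (pow_eq_zero_iff two_ne_zero).mp h
      rw [Ideal.Quotient.eq_zero_iff_mem] at h0
      exact hc t ((Ideal.Quotient.mk_eq_mk_iff_sub_mem f (algebraMap ℝ _ t)).mpr h0).symm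
    choose q hq using fun t : ℝ =>
      Ideal.Quotient.mk_surjective ((π ((f - algebraMap ℝ _ t) ^ 2))⁻¹)
    set n : ℝ → BoundedContinuousFunction X ℝ :=
      fun t => 1 - q t * (f - algebraMap ℝ _ t) ^ 2 with hn_def
    have hnm : ∀ t, n t ∈ m := by
      intro t
      rw [← Ideal.Quotient.eq_zero_iff_mem]
      show π _ = 0
      rw [map_sub, map_one, map_mul, hq t, inv_mul_cancel₀ (hne t), sub_self]
    set δ : ℝ → ℝ := fun t => min 1 (2 * (‖q t‖ + 1))⁻¹ with hδ_def
    have hδpos : ∀ t, 0 < δ t := by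
      intro t
      apply lt_min one_pos
      positivity
    obtain ⟨s, hs⟩ := isCompact_Icc (a := -‖f‖) (b := ‖f‖) |>.elim_finite_subcover
      (fun t => ball t (δ t)) (fun t => isOpen_ball)
      (fun x hx => Set.mem_iUnion.2 ⟨x, mem_ball_self (hδpos x)⟩)
    set S : BoundedContinuousFunction X ℝ := ∑ t ∈ s, (n t) ^ 2 with hS_def
    have hSm : S ∈ m := Ideal.sum_mem _ (fun t _ => by rw [sq]; exact Ideal.mul_mem_left _ _ (hnm t))
    have hS4 : ∀ x, (4 : ℝ)⁻¹ ≤ S x := by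
      intro x
      have hfx : f x ∈ Set.Icc (-‖f‖) ‖f‖ := by
        have := f.norm_coe_le_norm x
        rw [Real.norm_eq_abs, abs_le] at this
        exact this
      obtain ⟨t, hts, hxt⟩ := Set.mem_iUnion₂.1 (hs hfx)
      have hd : |f x - t| < δ t := by rwa [mem_ball, Real.dist_eq] at hxt
      have hqb : |q t x| ≤ ‖q t‖ := by
        have := (q t).norm_coe_le_norm x
        rwa [Real.norm_eq_abs] at this
      have hδ1 : δ t ≤ 1 := min_le_left _ _
      have hδ2 : δ t ≤ (2 * (‖q t‖ + 1))⁻¹ := min_le_right _ _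
      have hδ2' : (2 * (‖q t‖ + 1)) * δ t ≤ 1 := by
        calc (2 * (‖q t‖ + 1)) * δ t ≤ (2 * (‖q t‖ + 1)) * (2 * (‖q t‖ + 1))⁻¹ :=
              mul_le_mul_of_nonneg_left hδ2 (by positivity)
          _ = 1 := mul_inv_cancel₀ (by positivity)
      have hnt : (2 : ℝ)⁻¹ ≤ n t x := by
        have hev : n t x = 1 - q t x * (f x - t) ^ 2 := by
          simp [hn_def, Algebra.algebraMap_eq_smul_one, smul_eq_mul]
        rw [hev]
        have habs : |q t x * (f x - t) ^ 2| ≤ ‖q t‖ * δ t ^ 2 := by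
          rw [abs_mul, abs_pow]
          have h1 : |f x - t| ^ 2 ≤ δ t ^ 2 := by
            apply pow_le_pow_left₀ (abs_nonneg _) hd.le
          exact mul_le_mul hqb h1 (by positivity) (norm_nonneg _)
        have hkey : ‖q t‖ * δ t ^ 2 ≤ 2⁻¹ := by
          nlinarith [hδpos t, norm_nonneg (q t), hδ2', hδ1]
        have := (abs_le.1 habs).2
        linarith
      have hsq : (4 : ℝ)⁻¹ ≤ (n t x) ^ 2 := by nlinarith
      have hSsum : S x = ∑ t ∈ s, (n t x) ^ 2 := by
        simp [hS_def]
      rw [hSsum]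
      calc (4 : ℝ)⁻¹ ≤ (n t x) ^ 2 := hsq
        _ ≤ ∑ t ∈ s, (n t x) ^ 2 :=
          Finset.single_le_sum (fun i _ => sq_nonneg (n i x)) hts
    have hSpos : ∀ x, (0 : ℝ) < S x := fun x => lt_of_lt_of_le (by norm_num) (hS4 x)
    set Sinv : BoundedContinuousFunction X ℝ :=
      BoundedContinuousFunction.ofNormedAddCommGroup (fun x => (S x)⁻¹)
        (S.continuous.inv₀ (fun x => (hSpos x).ne')) 4
        (by
          intro x
          rw [Real.norm_eq_abs, abs_inv, abs_of_pos (hSpos x)]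
          rw [inv_le_comm₀ (hSpos x) (by norm_num)]
          exact hS4 x) with hSinv_def
    have hone : S * Sinv = 1 := by
      ext x
      simp [hSinv_def, mul_inv_cancel₀ (hSpos x).ne']
    have h1m : (1 : BoundedContinuousFunction X ℝ) ∈ m := by
      rw [← hone]; exact Ideal.mul_mem_right _ _ hSm
    exact hm.ne_top ((Ideal.eq_top_iff_one m).2 h1m)
end

section
/- Let A be a commutative ring such that for all f, g ∈ A with Z(f) ⊆ Z(g) (where Z(h) = {m ∈ Max A : h ∈ m}) there exist h ∈ A and ℓ ≥ 1 with g^ℓ = f·h (Łojasiewicz property). Then for every ideal a of A, the ideal J(Z[a]) := {g ∈ A : ∃ f ∈ a, Z(g) = Z(f)} equals the radical √a; in particular an ideal of A is radical if and only if it is a z_A-ideal. -/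
/-- `zset f` is the set of maximal ideals containing `f`. -/
def zset {A : Type*} [CommRing A] (f : A) : Set (Ideal A) :=
  {m | m.IsMaximal ∧ f ∈ m}

lemma zset_pow {A : Type*} [CommRing A] (f : A) {n : ℕ} (hn : 0 < n) :
    zset (f ^ n) = zset f := by
  ext m
  simp only [zset, Set.mem_setOf_eq, and_congr_right_iff]
  intro hm
  exact (hm.isPrime.pow_mem_iff_mem n hn)

/-- If `A` satisfies the Łojasiewicz property (`Z(f) ⊆ Z(g)` implies `g^ℓ = f·h` for
some `ℓ ≥ 1`), then for every ideal `a`, `J(Z[a]) = √a`; in particular an ideal is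
radical iff it is a `z_A`-ideal. -/
theorem stmt15 {A : Type*} [CommRing A]
    (hloj : ∀ f g : A, zset f ⊆ zset g → ∃ (h : A) (ℓ : ℕ), 0 < ℓ ∧ g ^ ℓ = f * h) :
    ∀ a : Ideal A,
      ({g : A | ∃ f ∈ a, zset g = zset f} = (a.radical : Set A)) ∧
      (a.IsRadical ↔ {g : A | ∃ f ∈ a, zset g = zset f} = (a : Set A)) := by
  intro a
  have key : {g : A | ∃ f ∈ a, zset g = zset f} = (a.radical : Set A) := by
    ext g
    constructor
    · rintro ⟨f, hf, hz⟩
      obtain ⟨h, ℓ, hℓ, heq⟩ := hloj f g hz.symm.subset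
      exact ⟨ℓ, heq ▸ a.mul_mem_right h hf⟩
    · rintro ⟨n, hn⟩
      rcases n with _ | n
      · have : (1 : A) ∈ a := by simpa using hn
        exact ⟨g, (Ideal.eq_top_iff_one a).mpr this ▸ trivial, rfl⟩
      · exact ⟨g ^ (n + 1), hn, (zset_pow g n.succ_pos).symm⟩
  refine ⟨key, ?_⟩
  rw [key]
  constructor
  · intro h
    exact_mod_cast congrArg (SetLike.coe) (Ideal.radical_eq_iff.mpr h : a.radical = a)
  · intro h
    have : a.radical = a := SetLike.coe_injective h
    exact Ideal.radical_eq_iff.mp this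
end

section
/- Let f be a real-valued function on X with f(x) ≥ r for all x ∈ X, for some real r > 1, and let g = Σ_{j=0}^{n} g_j·f^j where each |g_j(x)| < c for a constant c > 1. Then there exists a positive integer k such that |g(x)| ≤ f(x)^k for every x ∈ X. Consequently, the ring S*(X)[f] generated by the bounded functions and f equals {g : ∃ k, |g| ≤ f^k pointwise}. -/
/-- If `f ≥ r > 1` and `g = Σ gⱼ·f^j` with `|gⱼ| < c`, then `|g| ≤ f^k` for some `k ≥ 1`;
consequently the ring generated over the bounded functions by `f` is exactly
`{g | ∃ k, |g| ≤ f^k pointwise}`. -/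
theorem stmt17 {X : Type*} (f : X → ℝ) (r : ℝ) (hr : 1 < r) (hf : ∀ x, r ≤ f x) :
    (∀ (n : ℕ) (g : Fin (n + 1) → X → ℝ) (c : ℝ), 1 < c → (∀ j x, |g j x| < c) →
      ∃ k : ℕ, 0 < k ∧ ∀ x, |∑ j : Fin (n + 1), g j x * f x ^ (j : ℕ)| ≤ f x ^ k) ∧
    ((Subring.closure ({h : X → ℝ | ∃ C : ℝ, ∀ x, |h x| ≤ C} ∪ {f}) : Set (X → ℝ)) =
      {g : X → ℝ | ∃ k : ℕ, ∀ x, |g x| ≤ f x ^ k}) := by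
  have hf1 : ∀ x, (1:ℝ) ≤ f x := fun x => le_trans hr.le (hf x)
  have hfpos : ∀ x, (0:ℝ) < f x := fun x => lt_of_lt_of_le (lt_trans one_pos hr) (hf x)
  have key : ∀ C : ℝ, ∃ k : ℕ, ∀ x, C ≤ f x ^ k := by
    intro C
    obtain ⟨k, hk⟩ := pow_unbounded_of_one_lt C hr
    refine ⟨k, fun x => le_trans hk.le ?_⟩
    exact pow_le_pow_left₀ (le_trans zero_le_one hr.le) (hf x) k
  have hpowmono : ∀ x, ∀ {a b : ℕ}, a ≤ b → f x ^ a ≤ f x ^ b := fun x {a b} hab =>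
    pow_le_pow_right₀ (hf1 x) hab
  constructor
  · -- quantitative part
    intro n g c hc hg
    obtain ⟨m, hm⟩ := key ((n + 1) * c)
    refine ⟨m + n + 1, Nat.succ_pos _, fun x => ?_⟩
    have h1 : |∑ j : Fin (n + 1), g j x * f x ^ (j : ℕ)|
        ≤ ∑ j : Fin (n + 1), |g j x * f x ^ (j : ℕ)| := Finset.abs_sum_le_sum_abs _ _
    have h2 : ∀ j : Fin (n + 1), |g j x * f x ^ (j : ℕ)| ≤ c * f x ^ n := by
      intro j
      rw [abs_mul, abs_pow, abs_of_pos (hfpos x)]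
      exact mul_le_mul (hg j x).le (hpowmono x (Nat.lt_succ_iff.mp j.isLt))
        (pow_nonneg (hfpos x).le _) (le_trans zero_le_one hc.le)
    have h3 : ∑ j : Fin (n + 1), |g j x * f x ^ (j : ℕ)| ≤ (n + 1) * c * f x ^ n := by
      calc ∑ j : Fin (n + 1), |g j x * f x ^ (j : ℕ)|
          ≤ ∑ _j : Fin (n + 1), c * f x ^ n := Finset.sum_le_sum fun j _ => h2 j
        _ = (n + 1) * c * f x ^ n := by
            simp [Finset.sum_const, Finset.card_univ]; ring
    have h4 : (n + 1 : ℝ) * c * f x ^ n ≤ f x ^ m * f x ^ n :=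
      mul_le_mul_of_nonneg_right (hm x) (pow_nonneg (hfpos x).le _)
    calc |∑ j : Fin (n + 1), g j x * f x ^ (j : ℕ)|
        ≤ (n + 1) * c * f x ^ n := le_trans h1 h3
      _ ≤ f x ^ m * f x ^ n := h4
      _ = f x ^ (m + n) := (pow_add _ _ _).symm
      _ ≤ f x ^ (m + n + 1) := hpowmono x (Nat.le_succ _)
  · -- ring description
    set S : Subring (X → ℝ) :=
      { carrier := {g : X → ℝ | ∃ k : ℕ, ∀ x, |g x| ≤ f x ^ k}
        zero_mem' := ⟨0, fun x => by simp⟩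
        one_mem' := ⟨0, fun x => by simp⟩
        add_mem' := by
          rintro a b ⟨k1, hk1⟩ ⟨k2, hk2⟩
          obtain ⟨m, hm⟩ := key (2 : ℝ)
          refine ⟨k1 + k2 + m, fun x => ?_⟩
          have h1 : f x ^ k1 ≤ f x ^ (k1 + k2) := hpowmono x (Nat.le_add_right _ _)
          have h2 : f x ^ k2 ≤ f x ^ (k1 + k2) := hpowmono x (Nat.le_add_left _ _)
          calc |(a + b) x| ≤ |a x| + |b x| := abs_add_le _ _
            _ ≤ f x ^ (k1 + k2) + f x ^ (k1 + k2) := by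
                have := hk1 x; have := hk2 x; linarith
            _ = 2 * f x ^ (k1 + k2) := by ring
            _ ≤ f x ^ m * f x ^ (k1 + k2) :=
                mul_le_mul_of_nonneg_right (hm x) (pow_nonneg (hfpos x).le _)
            _ = f x ^ (k1 + k2 + m) := by rw [← pow_add]; ring_nf
        neg_mem' := by
          rintro a ⟨k, hk⟩
          exact ⟨k, fun x => by simpa using hk x⟩
        mul_mem' := by
          rintro a b ⟨k1, hk1⟩ ⟨k2, hk2⟩
          refine ⟨k1 + k2, fun x => ?_⟩
          calc |(a * b) x| = |a x| * |b x| := abs_mul _ _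
            _ ≤ f x ^ k1 * f x ^ k2 :=
                mul_le_mul (hk1 x) (hk2 x) (abs_nonneg _) (pow_nonneg (hfpos x).le _)
            _ = f x ^ (k1 + k2) := (pow_add _ _ _).symm }
    apply Set.eq_of_subset_of_subset
    · have : Subring.closure ({h : X → ℝ | ∃ C : ℝ, ∀ x, |h x| ≤ C} ∪ {f}) ≤ S := by
        rw [Subring.closure_le]
        rintro h (⟨C, hC⟩ | hhf)
        · obtain ⟨k, hk⟩ := key C
          exact ⟨k, fun x => le_trans (hC x) (hk x)⟩
        · rw [Set.mem_singleton_iff] at hhf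
          subst hhf
          exact ⟨1, fun x => by rw [pow_one]; exact le_of_eq (abs_of_pos (hfpos x))⟩
      exact this
    · rintro g ⟨k, hk⟩
      have hfmem : f ∈ Subring.closure ({h : X → ℝ | ∃ C : ℝ, ∀ x, |h x| ≤ C} ∪ {f}) :=
        Subring.subset_closure (Or.inr rfl)
      have hbdd : (fun x => g x / f x ^ k) ∈
          Subring.closure ({h : X → ℝ | ∃ C : ℝ, ∀ x, |h x| ≤ C} ∪ {f}) := by
        apply Subring.subset_closure
        left
        refine ⟨1, fun x => ?_⟩
        rw [abs_div, abs_pow, abs_of_pos (hfpos x), div_le_one (pow_pos (hfpos x) k)]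
        exact hk x
      have : g = (fun x => g x / f x ^ k) * f ^ k := by
        funext x
        simp only [Pi.mul_apply, Pi.pow_apply]
        rw [div_mul_cancel₀]
        exact (pow_pos (hfpos x) k).ne'
      rw [this]
      exact Subring.mul_mem _ hbdd (Subring.pow_mem _ hfmem k)
end

section
/- For real-valued functions g₁, …, g_n on X, the intermediate ring S*(X)[g₁,…,g_n] generated over the bounded functions by g₁,…,g_n equals the simple extension S*(X)[|g₁| + ⋯ + |g_n|]. In particular, every finitely generated intermediate ring between S*(X) and S(X) is a simple extension. -/
/-- The intermediate ring generated over the bounded functions by `g₁, …, gₙ` equals the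
simple extension generated by `|g₁| + ⋯ + |gₙ|`; in particular every finitely generated
intermediate ring is a simple extension. -/
theorem stmt18 {X : Type*} (n : ℕ) (g : Fin n → X → ℝ) :
    Subring.closure ({h : X → ℝ | ∃ C : ℝ, ∀ x, |h x| ≤ C} ∪ Set.range g) =
    Subring.closure ({h : X → ℝ | ∃ C : ℝ, ∀ x, |h x| ≤ C} ∪
      {fun x => ∑ i : Fin n, |g i x|}) := by
  apply le_antisymm
  · apply Subring.closure_le.2
    rintro f (hf | ⟨i, rfl⟩)
    · exact Subring.subset_closure (Or.inl hf)
    · have hs : (fun x => ∑ j : Fin n, |g j x|) ∈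
          Subring.closure ({h : X → ℝ | ∃ C : ℝ, ∀ x, |h x| ≤ C} ∪
            {fun x => ∑ i : Fin n, |g i x|}) :=
        Subring.subset_closure (Or.inr rfl)
      set q : X → ℝ := fun x =>
        if (∑ j : Fin n, |g j x|) = 0 then 0 else g i x / ∑ j : Fin n, |g j x| with hq
      have hle : ∀ x, |g i x| ≤ ∑ j : Fin n, |g j x| := fun x =>
        Finset.single_le_sum (f := fun j => |g j x|) (fun j _ => abs_nonneg _) (Finset.mem_univ i)
      have hsn : ∀ x, 0 ≤ ∑ j : Fin n, |g j x| := fun x =>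
        Finset.sum_nonneg fun j _ => abs_nonneg _
      have hqmem : q ∈ Subring.closure ({h : X → ℝ | ∃ C : ℝ, ∀ x, |h x| ≤ C} ∪
            {fun x => ∑ i : Fin n, |g i x|}) := by
        apply Subring.subset_closure
        left
        refine ⟨1, fun x => ?_⟩
        simp only [hq]
        split_ifs with h
        · simp
        · rw [abs_div, div_le_one (lt_of_le_of_ne (abs_nonneg _) (fun hc => h (abs_eq_zero.mp hc.symm)))]
          exact (hle x).trans (le_abs_self _)
      have key : g i = (fun x => ∑ j : Fin n, |g j x|) * q := by
        funext x
        simp only [Pi.mul_apply, hq]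
        split_ifs with h
        · have : |g i x| = 0 := le_antisymm (h ▸ hle x) (abs_nonneg _)
          simp [abs_eq_zero.mp this]
        · field_simp
      rw [key]
      exact Subring.mul_mem _ hs hqmem
  · apply Subring.closure_le.2
    rintro f (hf | rfl)
    · exact Subring.subset_closure (Or.inl hf)
    · have : (fun x => ∑ i : Fin n, |g i x|) =
          ∑ i : Fin n, (g i * fun x => if g i x < 0 then (-1 : ℝ) else 1) := by
        funext x
        simp only [Finset.sum_apply, Pi.mul_apply]
        refine Finset.sum_congr rfl fun i _ => ?_
        split_ifs with h
        · rw [abs_of_neg h]; ring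
        · rw [abs_of_nonneg (not_lt.mp h)]; ring
      rw [this]
      apply Subring.sum_mem
      intro i _
      exact Subring.mul_mem _ (Subring.subset_closure (Or.inr ⟨i, rfl⟩))
        (Subring.subset_closure (Or.inl ⟨1, fun x => by simp only []; split_ifs <;> simp⟩))
end

section
/- Let f, g be continuous real-valued functions on a topological space X such that the zero set Z(g) is contained in the interior (in X) of the zero set Z(f). Then there exists a continuous function h on X with f = g·h and Z(f) ⊆ Z(h); h can be defined as f/g on X ∖ Z(g) and 0 on Int(Z(f)), these open sets covering X and the definitions agreeing on the overlap. -/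
/-- If `Z(g) ⊆ Int(Z(f))` for continuous real functions `f, g` on `X`, then there is a
continuous `h` with `f = g·h` and `Z(f) ⊆ Z(h)`. -/
theorem stmt19 {X : Type*} [TopologicalSpace X] (f g : C(X, ℝ))
    (h : {x | g x = 0} ⊆ interior {x | f x = 0}) :
    ∃ h' : C(X, ℝ), f = g * h' ∧ {x | f x = 0} ⊆ {x | h' x = 0} := by
  classical
  set H : X → ℝ := fun x => if g x = 0 then 0 else f x / g x with hH
  have hcont : Continuous H := by
    rw [continuous_iff_continuousAt]
    intro x
    by_cases hg : g x = 0
    · have hx : x ∈ interior {x | f x = 0} := h hg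
      have hev : ∀ᶠ y in nhds x, H y = 0 := by
        filter_upwards [isOpen_interior.mem_nhds hx] with y hy
        have hfy : f y = 0 := (interior_subset hy : y ∈ {x | f x = 0})
        by_cases hgy : g y = 0 <;> simp [H, hgy, hfy]
      exact ContinuousAt.congr continuousAt_const (hev.mono fun y hy => hy.symm)
    · have hev : ∀ᶠ y in nhds x, g y ≠ 0 := g.continuous.continuousAt.eventually_ne hg
      have hev' : ∀ᶠ y in nhds x, (fun y => f y / g y) y = H y := by
        filter_upwards [hev] with y hy
        simp [H, hy]
      exact ContinuousAt.congr
        (f.continuous.continuousAt.div g.continuous.continuousAt hg) hev'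
  refine ⟨⟨H, hcont⟩, ?_, ?_⟩
  · ext x
    by_cases hg : g x = 0
    · have hfx : f x = 0 := (interior_subset (h hg) : x ∈ {x | f x = 0})
      simp [H, hg, hfx]
    · simp [H, hg]
      field_simp
  · intro x hfx
    by_cases hg : g x = 0 <;> simp_all [H]
end
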